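/- Define g₁ : [0,1] → ℝ by g₁(0) = 5/8 and, for z ∈ (0,1], g₁(z) = (−2z² + 9z − 4 + 2·√(4−z)·(1−z)^{3/2}) / (z(4−z)). Then g₁ takes values in [0,1], and for every z ∈ [0,1] it satisfies the functional equation g₁(z) = 2 / (4 − z − g₁(g₁(z))). -/

import Mathlib

namespace VEP

/-- The generating function `g₁` for the critical geometric model with uniform `{-1, 1}`
displacements: `g₁(0) = 5/8` and for `z ≠ 0`,
`g₁(z) = (−2z² + 9z − 4 + 2√(4−z)(1−z)^{3/2}) / (z(4−z))`. -/
noncomputable def g1 (z : ℝ) : ℝ :=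
  if z = 0 then 5 / 8
  else (-2 * z ^ 2 + 9 * z - 4 + 2 * Real.sqrt (4 - z) * (1 - z) ^ ((3 : ℝ) / 2))
    / (z * (4 - z))

lemma rpow32 (x : ℝ) (hx : 0 ≤ x) : x ^ ((3:ℝ)/2) = Real.sqrt x ^ 3 := by
  rw [show (3:ℝ)/2 = (1/2)*3 by norm_num, Real.rpow_mul hx, Real.sqrt_eq_rpow,
    ← Real.rpow_natCast (x ^ ((1:ℝ)/2)) 3]
  norm_num

lemma g1_ne (z : ℝ) (h : z ≠ 0) :
    g1 z = (-2 * z ^ 2 + 9 * z - 4 + 2 * Real.sqrt (4 - z) * (1 - z) ^ ((3 : ℝ) / 2))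
      / (z * (4 - z)) := by rw [g1, if_neg h]

lemma g1_eq (z : ℝ) (h0 : 0 ≤ z) (h1 : z ≤ 1) :
    g1 z = (Real.sqrt (4-z) * (Real.sqrt (4-z) + 2 * Real.sqrt (1-z)) - 3 * Real.sqrt (1-z) ^ 2)
      / (Real.sqrt (4-z) * (Real.sqrt (4-z) + 2 * Real.sqrt (1-z))) := by
  set s := Real.sqrt (4-z) with hsdef
  set u := Real.sqrt (1-z) with hudef
  have hs : s ^ 2 = 4 - z := Real.sq_sqrt (by linarith)
  have hu : u ^ 2 = 1 - z := Real.sq_sqrt (by linarith)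
  have hs0 : 0 < s := Real.sqrt_pos.2 (by linarith)
  have hu0 : 0 ≤ u := Real.sqrt_nonneg _
  have hD : 0 < s * (s + 2*u) := by positivity
  rcases eq_or_lt_of_le h0 with h|h
  · have hz : z = 0 := h.symm
    subst hz
    have hs2 : s = 2 := by
      have : s^2 = 2^2 := by rw [hs]; norm_num
      nlinarith
    have hu1 : u = 1 := by
      have : u^2 = 1^2 := by rw [hu]; norm_num
      nlinarith
    rw [g1, if_pos rfl, hs2, hu1]; norm_num
  · rw [g1, if_neg h.ne', rpow32 _ (by linarith), ← hudef]
    rw [div_eq_div_iff (by nlinarith) hD.ne']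
    linear_combination ((-4) + 5*z + (-1)*z^2 + 4*u^4 + 2*s*u^3) * hs
      + (16 + (-8)*z + z^2 + 16*u^2 + (-4)*u^2*z + 8*s*u + (-2)*s*u*z) * hu

lemma key (z : ℝ)
    (s u r q : ℝ)
    (hs : s ^ 2 = 4 - z) (hu : u ^ 2 = 1 - z)
    (hs0 : 0 < s) (hu0 : 0 < u)
    (hr : r ^ 2 = s * (s + 2*u)) (hr0 : 0 < r)
    (h3 : q ^ 2 = 3)
    (w : ℝ) (hw : w = (s * (s + 2*u) - 3*u^2) / (s * (s + 2*u))) :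
    (-2 * w ^ 2 + 9 * w - 4 + 2 * (q*(s+u)/r) * (q*u/r)^3) / (w * (4 - w))
      = 4 - z - 2 / w := by
  have hD : 0 < s * (s + 2*u) := by positivity
  have hsu : u < s := by nlinarith
  have hW : 0 < s * (s + 2*u) - 3*u^2 := by nlinarith
  have hw0 : 0 < w := by rw [hw]; exact div_pos hW hD
  have hw4 : w < 4 := by rw [hw, div_lt_iff₀ hD]; nlinarith
  rw [hw]
  have hX : (0:ℝ) < 4*(s*(s+2*u)) - (s*(s+2*u) - 3*u^2) := by nlinarith
  field_simp [hD.ne', hW.ne', hr0.ne', hX.ne']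
  have key0 : (s*(s+2*u))^3 * ((((s * (s + 2 * u) - u ^ 2 * 3) * (-(2 * (s * (s + 2 * u) - u ^ 2 * 3)) + s * (s + 2 * u) * 9) - s ^ 2 * (s + 2 * u) ^ 2 * 4) * r ^ 4 + 2 * s ^ 2 * u ^ 3 * (s + 2 * u) ^ 2 * q ^ 4 * (s + u)) * (s * (s + 2 * u) - u ^ 2 * 3) - ((4 - z) * (s * (s + 2 * u) - u ^ 2 * 3) - 2 * (s * (s + 2 * u))) * r ^ 4 * (s * (s + 2 * u) - u ^ 2 * 3) * (s * (s + 2 * u) * 4 - (s * (s + 2 * u) - u ^ 2 * 3))) = 0 := by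
    linear_combination ((-576)*s^5*u^11 + (-192)*s^5*u^11*q^2 + (-1632)*s^6*u^10 + (-544)*s^6*u^10*q^2 + (-1344)*s^7*u^9 + (-448)*s^7*u^9*q^2 + (432)*s^8*u^8 + (144)*s^8*u^8*q^2 + (1500)*s^9*u^7 + (500)*s^9*u^7*q^2 + (1122)*s^10*u^6 + (374)*s^10*u^6*q^2 + (414)*s^11*u^5 + (138)*s^11*u^5*q^2 + (78)*s^12*u^4 + (26)*s^12*u^4*q^2 + (6)*s^13*u^3 + (2)*s^13*u^3*q^2) * h3 + ((-432)*s^3*u^9*r^2 + (216)*s^3*u^9*z*r^2 + (-1080)*s^4*u^8*r^2 + (468)*s^4*u^8*z*r^2 + (-864)*s^4*u^10 + (432)*s^4*u^10*z + (-420)*s^5*u^7*r^2 + (-30)*s^5*u^7*z*r^2 + (-2592)*s^5*u^9 + (1152)*s^5*u^9*z + (1026)*s^6*u^6*r^2 + (-765)*s^6*u^6*z*r^2 + (-1920)*s^6*u^8 + (408)*s^6*u^8*z + (1128)*s^7*u^5*r^2 + (-552)*s^7*u^5*z*r^2 + (1632)*s^7*u^7 + (-1560)*s^7*u^7*z + (213)*s^8*u^4*r^2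 + (129)*s^8*u^4*z*r^2 + (3282)*s^8*u^6 + (-1869)*s^8*u^6*z + (-240)*s^9*u^3*r^2 + (330)*s^9*u^3*z*r^2 + (1554)*s^9*u^5 + (-294)*s^9*u^5*z + (-156)*s^10*u^2*r^2 + (165)*s^10*u^2*z*r^2 + (-267)*s^10*u^4 + (789)*s^10*u^4*z + (-36)*s^11*u*r^2 + (36)*s^11*u*z*r^2 + (-552)*s^11*u^3 + (660)*s^11*u^3*z + (-3)*s^12*r^2 + (3)*s^12*z*r^2 + (-228)*s^12*u^2 + (237)*s^12*u^2*z + (-42)*s^13*u + (42)*s^13*u*z + (-3)*s^14 + (3)*s^14*z) * hr + ((-49152) + (135168)*z + (-150528)*z^2 + (91392)*z^3 + (-33600)*z^4 + (7728)*z^5 + (-1092)*z^6 + (87)*z^7 + (-3)*z^8 + (-1277952)*u^2 + (3231744)*u^2*z + (-3170304)*u^2*z^2 + (1632000)*u^2*z^3 + (-485760)*u^2*z^4 + (84528)*u^2*z^5 + (-8016)*u^2*z^6 + (321)*u^2*z^7 + (-1164288)*u^4 + (3614976)*u^4*z + (-3427200)*u^4*z^2 + (1531680)*u^4*z^3 +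 (-360180)*u^4*z^4 + (43317)*u^4*z^5 + (-2109)*u^4*z^6 + (2497536)*u^6 + (-3126528)*u^6*z + (1565568)*u^6*z^2 + (-391968)*u^6*z^3 + (49068)*u^6*z^4 + (-2457)*u^6*z^5 + (168960)*u^8 + (-300288)*u^8*z + (161856)*u^8*z^2 + (-35184)*u^8*z^3 + (2712)*u^8*z^4 + (-175104)*u^10 + (131328)*u^10*z + (-32832)*u^10*z^2 + (2736)*u^10*z^3 + (-196608)*s*u + (491520)*s*u*z + (-479232)*s*u*z^2 + (245760)*s*u*z^3 + (-72960)*s*u*z^4 + (12672)*s*u*z^5 + (-1200)*s*u*z^6 + (48)*s*u*z^7 + (-1013760)*s*u^3 + (2428416)*s*u^3*z + (-2085120)*s*u^3*z^2 + (884160)*s*u^3*z^3 + (-201240)*s*u^3*z^4 + (23670)*s*u^3*z^5 + (-1134)*s*u^3*z^6 + (579072)*s*u^5 + (-250368)*s*u^5*z + (-111552)*s*u^5*z^2 + (87072)*s*u^5*z^3 + (-18282)*s*u^5*z^4 + (1284)*s*u^5*z^5 + (812544)*s*u^7 + (-948480)*s*u^7*z + (406656)*s*u^7*z^2 + (-76272)*s*u^7*z^3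 + (5298)*s*u^7*z^4 + (-167424)*s*u^9 + (115200)*s*u^9*z + (-26208)*s*u^9*z^2 + (1968)*s*u^9*z^3 + (-13824)*s*u^11 + (6912)*s*u^11*z + (-864)*s*u^11*z^2 + (-12288)*s^2 + (30720)*s^2*z + (-29952)*s^2*z^2 + (15360)*s^2*z^3 + (-4560)*s^2*z^4 + (792)*s^2*z^5 + (-75)*s^2*z^6 + (3)*s^2*z^7 + (-319488)*s^2*u^2 + (728064)*s^2*u^2*z + (-610560)*s^2*u^2*z^2 + (255360)*s^2*u^2*z^3 + (-57600)*s^2*u^2*z^4 + (6732)*s^2*u^2*z^5 + (-321)*s^2*u^2*z^6 + (-291072)*s^2*u^4 + (830976)*s^2*u^4*z + (-649056)*s^2*u^4*z^2 + (220656)*s^2*u^4*z^3 + (-34881)*s^2*u^4*z^4 + (2109)*s^2*u^4*z^5 + (624384)*s^2*u^6 + (-625536)*s^2*u^6*z + (235008)*s^2*u^6*z^2 + (-39240)*s^2*u^6*z^3 + (2457)*s^2*u^6*z^4 + (42240)*s^2*u^8 + (-64512)*s^2*u^8*z + (24336)*s^2*u^8*z^2 + (-2712)*s^2*u^8*z^3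 + (-43776)*s^2*u^10 + (21888)*s^2*u^10*z + (-2736)*s^2*u^10*z^2 + (-49152)*s^3*u + (110592)*s^3*u*z + (-92160)*s^3*u*z^2 + (38400)*s^3*u*z^3 + (-8640)*s^3*u*z^4 + (1008)*s^3*u*z^5 + (-48)*s^3*u*z^6 + (-253440)*s^3*u^3 + (543744)*s^3*u^3*z + (-385344)*s^3*u^3*z^2 + (124704)*s^3*u^3*z^3 + (-19134)*s^3*u^3*z^4 + (1134)*s^3*u^3*z^5 + (144768)*s^3*u^5 + (-26400)*s^3*u^5*z + (-34488)*s^3*u^5*z^2 + (13146)*s^3*u^5*z^3 + (-1284)*s^3*u^5*z^4 + (203136)*s^3*u^7 + (-186336)*s^3*u^7*z + (55080)*s^3*u^7*z^2 + (-5298)*s^3*u^7*z^3 + (-41856)*s^3*u^9 + (18336)*s^3*u^9*z + (-1968)*s^3*u^9*z^2 + (-3456)*s^3*u^11 + (864)*s^3*u^11*z + (-3072)*s^4 + (6912)*s^4*z + (-5760)*s^4*z^2 + (2400)*s^4*z^3 + (-540)*s^4*z^4 + (63)*s^4*z^5 + (-3)*s^4*z^6 + (-79872)*s^4*u^2 +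 (162048)*s^4*u^2*z + (-112128)*s^4*u^2*z^2 + (35808)*s^4*u^2*z^3 + (-5448)*s^4*u^2*z^4 + (321)*s^4*u^2*z^5 + (-72768)*s^4*u^4 + (189552)*s^4*u^4*z + (-114876)*s^4*u^4*z^2 + (26445)*s^4*u^4*z^3 + (-2109)*s^4*u^4*z^4 + (156096)*s^4*u^6 + (-117360)*s^4*u^6*z + (29412)*s^4*u^6*z^2 + (-2457)*s^4*u^6*z^3 + (10560)*s^4*u^8 + (-13488)*s^4*u^8*z + (2712)*s^4*u^8*z^2 + (-10944)*s^4*u^10 + (2736)*s^4*u^10*z + (-12288)*s^5*u + (24576)*s^5*u*z + (-16896)*s^5*u*z^2 + (5376)*s^5*u*z^3 + (-816)*s^5*u*z^4 + (48)*s^5*u*z^5 + (-63360)*s^5*u^3 + (120096)*s^5*u^3*z + (-66312)*s^5*u^3*z^2 + (14598)*s^5*u^3*z^3 + (-1134)*s^5*u^3*z^4 + (36192)*s^5*u^5 + (2448)*s^5*u^5*z + (-8010)*s^5*u^5*z^2 + (1284)*s^5*u^5*z^3 + (50784)*s^5*u^7 + (-33888)*s^5*u^7*z + (5298)*s^5*u^7*z^2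 + (-10464)*s^5*u^9 + (1968)*s^5*u^9*z + (-768)*s^6 + (1536)*s^6*z + (-1056)*s^6*z^2 + (336)*s^6*z^3 + (-51)*s^6*z^4 + (3)*s^6*z^5 + (-19968)*s^6*u^2 + (35520)*s^6*u^2*z + (-19152)*s^6*u^2*z^2 + (4164)*s^6*u^2*z^3 + (-321)*s^6*u^2*z^4 + (-18192)*s^6*u^4 + (42840)*s^6*u^4*z + (-18009)*s^6*u^4*z^2 + (2109)*s^6*u^4*z^3 + (39024)*s^6*u^6 + (-19584)*s^6*u^6*z + (2457)*s^6*u^6*z^2 + (2640)*s^6*u^8 + (-2712)*s^6*u^8*z + (-3072)*s^7*u + (5376)*s^7*u*z + (-2880)*s^7*u*z^2 + (624)*s^7*u*z^3 + (-48)*s^7*u*z^4 + (-15840)*s^7*u^3 + (26064)*s^7*u^3*z + (-10062)*s^7*u^3*z^2 + (1134)*s^7*u^3*z^3 + (9048)*s^7*u^5 + (2874)*s^7*u^5*z + (-1284)*s^7*u^5*z^2 + (12696)*s^7*u^7 + (-5298)*s^7*u^7*z + (-192)*s^8 + (336)*s^8*z + (-180)*s^8*z^2 + (39)*s^8*z^3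 + (-3)*s^8*z^4 + (-4992)*s^8*u^2 + (7632)*s^8*u^2*z + (-2880)*s^8*u^2*z^2 + (321)*s^8*u^2*z^3 + (-4548)*s^8*u^4 + (9573)*s^8*u^4*z + (-2109)*s^8*u^4*z^2 + (9756)*s^8*u^6 + (-2457)*s^8*u^6*z + (-768)*s^9*u + (1152)*s^9*u*z + (-432)*s^9*u*z^2 + (48)*s^9*u*z^3 + (-3960)*s^9*u^3 + (5526)*s^9*u^3*z + (-1134)*s^9*u^3*z^2 + (2262)*s^9*u^5 + (1284)*s^9*u^5*z + (-48)*s^10 + (72)*s^10*z + (-27)*s^10*z^2 + (3)*s^10*z^3 + (-1248)*s^10*u^2 + (1596)*s^10*u^2*z + (-321)*s^10*u^2*z^2 + (-1137)*s^10*u^4 + (2109)*s^10*u^4*z + (-192)*s^11*u + (240)*s^11*u*z + (-48)*s^11*u*z^2 + (-990)*s^11*u^3 + (1134)*s^11*u^3*z + (-12)*s^12 + (15)*s^12*z + (-3)*s^12*z^2 + (-312)*s^12*u^2 + (321)*s^12*u^2*z + (-48)*s^13*u + (48)*s^13*u*z + (-3)*s^14 + (3)*s^14*z) * hs + ((196608)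 + (-393216)*z + (344064)*z^2 + (-172032)*z^3 + (53760)*z^4 + (-10752)*z^5 + (1344)*z^6 + (-96)*z^7 + (3)*z^8 + (5308416)*u^2 + (-9289728)*u^2*z + (6967296)*u^2*z^2 + (-2903040)*u^2*z^3 + (725760)*u^2*z^4 + (-108864)*u^2*z^5 + (9072)*u^2*z^6 + (-324)*u^2*z^7 + (9965568)*u^4 + (-14948352)*u^4*z + (9342720)*u^4*z^2 + (-3114240)*u^4*z^3 + (583920)*u^4*z^4 + (-58392)*u^4*z^5 + (2433)*u^4*z^6 + (-24576)*u^6 + (30720)*u^6*z + (-15360)*u^6*z^2 + (3840)*u^6*z^3 + (-480)*u^6*z^4 + (24)*u^6*z^5 + (-700416)*u^8 + (700416)*u^8*z + (-262656)*u^8*z^2 + (43776)*u^8*z^3 + (-2736)*u^8*z^4 + (786432)*s*u + (-1376256)*s*u*z + (1032192)*s*u*z^2 + (-430080)*s*u*z^3 + (107520)*s*u*z^4 + (-16128)*s*u*z^5 + (1344)*s*u*z^6 + (-48)*s*u*z^7 + (4841472)*s*u^3 + (-7262208)*s*u^3*z + (4538880)*s*u^3*z^2 + (-1512960)*s*u^3*z^3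 + (283680)*s*u^3*z^4 + (-28368)*s*u^3*z^5 + (1182)*s*u^3*z^6 + (2525184)*s*u^5 + (-3156480)*s*u^5*z + (1578240)*s*u^5*z^2 + (-394560)*s*u^5*z^3 + (49320)*s*u^5*z^4 + (-2466)*s*u^5*z^5 + (-724992)*s*u^7 + (724992)*s*u^7*z + (-271872)*s*u^7*z^2 + (45312)*s*u^7*z^3 + (-2832)*s*u^7*z^4 + (-55296)*s*u^9 + (41472)*s*u^9*z + (-10368)*s*u^9*z^2 + (864)*s*u^9*z^3) * hu
  have key1 := (mul_eq_zero.1 key0).resolve_left (by positivity)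
  have hW2 : s * (s + 2 * u) - u ^ 2 * 3 ≠ 0 := by nlinarith
  have hX2 : s * (s + 2 * u) * 4 - (s * (s + 2 * u) - u ^ 2 * 3) ≠ 0 := by nlinarith
  rw [div_eq_iff (mul_ne_zero hW2 hX2)]
  have hWW : (s * (s + 2 * u) - u ^ 2 * 3) * (s * (s + 2 * u) - u ^ 2 * 3)⁻¹ = 1 := mul_inv_cancel₀ hW2
  linear_combination (s * (s + 2 * u) - u ^ 2 * 3)⁻¹ * key1 + (r ^ 4 * (4 - z) * (s * (s + 2 * u) - u ^ 2 * 3) * (s * (s + 2 * u) * 4 - (s * (s + 2 * u) - u ^ 2 * 3)) - (((s * (s + 2 * u) - u ^ 2 * 3) * (-(2 * (s * (s + 2 * u) - u ^ 2 * 3)) + s * (s + 2 * u) * 9) - s ^ 2 * (s + 2 * u) ^ 2 * 4) * r ^ 4 + 2 * s ^ 2 * u ^ 3 * (s + 2 * u) ^ 2 * q ^ 4 * (s + u))) * hWW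


lemma main_lt (z s u r q : ℝ) (h0 : 0 ≤ z) (h1 : z < 1)
    (hs : s ^ 2 = 4 - z) (hu : u ^ 2 = 1 - z) (hs0 : 0 < s) (hu0 : 0 < u)
    (hr : r ^ 2 = s * (s + 2*u)) (hr0 : 0 < r) (hq : q = Real.sqrt 3)
    (hg : g1 z = (s * (s + 2*u) - 3*u^2) / (s * (s + 2*u))) :
    g1 z = 2 / (4 - z - g1 (g1 z)) := by
  have h3 : q ^ 2 = 3 := by rw [hq]; exact Real.sq_sqrt (by norm_num)
  have hq0 : 0 ≤ q := by rw [hq]; exact Real.sqrt_nonneg _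
  have hD : 0 < s * (s + 2*u) := by positivity
  have hsu : u < s := by nlinarith
  have hW : 0 < s * (s + 2*u) - 3*u^2 := by nlinarith
  have hw0 : 0 < g1 z := by rw [hg]; exact div_pos hW hD
  have h4w : 4 - g1 z = (q*(s+u)/r)^2 := by
    rw [hg, div_pow, mul_pow, h3, hr]
    field_simp
    try ring
  have h1w : 1 - g1 z = (q*u/r)^2 := by
    rw [hg, div_pow, mul_pow, h3, hr]
    field_simp
    try ring
  have hsq4 : Real.sqrt (4 - g1 z) = q*(s+u)/r := by
    rw [h4w, Real.sqrt_sq (by positivity)]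
  have hsq1 : Real.sqrt (1 - g1 z) = q*u/r := by
    rw [h1w, Real.sqrt_sq (by positivity)]
  have h1wn : (0:ℝ) ≤ 1 - g1 z := by rw [h1w]; positivity
  rw [g1_ne (g1 z) hw0.ne', rpow32 _ h1wn, hsq4, hsq1,
    key z s u r q hs hu hs0 hu0 hr hr0 h3 (g1 z) hg]
  rw [show (4:ℝ) - z - (4 - z - 2 / g1 z) = 2 / g1 z by ring]
  rw [div_div_eq_mul_div, mul_comm, mul_div_assoc]
  norm_num

/-- `g₁` maps `[0,1]` into `[0,1]` and satisfies `g₁(z) = 2 / (4 − z − g₁(g₁(z)))` there. -/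
theorem g1_functional_equation :
    (∀ z ∈ Set.Icc (0 : ℝ) 1, g1 z ∈ Set.Icc (0 : ℝ) 1) ∧
    (∀ z ∈ Set.Icc (0 : ℝ) 1, g1 z = 2 / (4 - z - g1 (g1 z))) := by
  constructor
  · rintro z ⟨h0, h1⟩
    rw [Set.mem_Icc, g1_eq z h0 h1]
    have hs : Real.sqrt (4-z) ^ 2 = 4 - z := Real.sq_sqrt (by linarith)
    have hu : Real.sqrt (1-z) ^ 2 = 1 - z := Real.sq_sqrt (by linarith)
    have hs0 : 0 < Real.sqrt (4-z) := Real.sqrt_pos.2 (by linarith)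
    have hu0 : 0 ≤ Real.sqrt (1-z) := Real.sqrt_nonneg _
    have hsu : Real.sqrt (1-z) ≤ Real.sqrt (4-z) := Real.sqrt_le_sqrt (by linarith)
    have hD : 0 < Real.sqrt (4-z) * (Real.sqrt (4-z) + 2 * Real.sqrt (1-z)) := by positivity
    constructor
    · apply div_nonneg _ hD.le
      nlinarith
    · rw [div_le_one hD]
      nlinarith
  · rintro z ⟨h0, h1⟩
    rcases eq_or_lt_of_le h1 with h|h
    · subst h
      have hg : g1 1 = 1 := by
        rw [g1_eq 1 (by norm_num) le_rfl, show (1:ℝ)-1 = 0 by norm_num, Real.sqrt_zero]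
        have h30 : (0:ℝ) < Real.sqrt (4-1) := Real.sqrt_pos.2 (by norm_num)
        rw [mul_zero, add_zero]
        norm_num
      rw [hg, hg]
      norm_num
    · have hs0 : 0 < Real.sqrt (4-z) := Real.sqrt_pos.2 (by linarith)
      have hu0' : (0:ℝ) ≤ Real.sqrt (1-z) := Real.sqrt_nonneg _
      have hDpos : 0 < Real.sqrt (4-z) * (Real.sqrt (4-z) + 2*Real.sqrt (1-z)) := by positivity
      exact main_lt z (Real.sqrt (4-z)) (Real.sqrt (1-z))
        (Real.sqrt (Real.sqrt (4-z) * (Real.sqrt (4-z) + 2 * Real.sqrt (1-z)))) (Real.sqrt 3)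
        h0 h
        (Real.sq_sqrt (by linarith)) (Real.sq_sqrt (by linarith))
        hs0 (Real.sqrt_pos.2 (by linarith))
        (Real.sq_sqrt hDpos.le) (Real.sqrt_pos.2 hDpos) rfl
        (g1_eq z h0 h1)

end VEP
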